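/- Fix μ₁ ∈ ℝ, σ > 0, π ∈ (0,1) and x ∈ ℝ. Writing p_{μ₂}(x) = π φ_{μ₁,σ}(x) + (1−π) φ_{μ₂,σ}(x), the score of the mixture at x converges to the score of the first component: s_{p_{μ₂}}(x) → −(x−μ₁)/σ² as μ₂ → +∞. -/

import Mathlib

open MeasureTheory Filter

/-- Gaussian density with mean `μ` and standard deviation `σ`. -/
noncomputable def gaussian (μ σ : ℝ) (x : ℝ) : ℝ :=
  (σ * Real.sqrt (2 * Real.pi))⁻¹ * Real.exp (-(x - μ) ^ 2 / (2 * σ ^ 2))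

/-- The score of a density `ρ`: the derivative of its log. -/
noncomputable def score (ρ : ℝ → ℝ) (x : ℝ) : ℝ :=
  deriv (fun y => Real.log (ρ y)) x

/-- Fisher divergence between densities `q` and `p`. -/
noncomputable def fisherDiv (q p : ℝ → ℝ) : ℝ :=
  ∫ x : ℝ, q x * (score q x - score p x) ^ 2

/-! The score of the mixture is `p' / p`. Viewed at the fixed point `x`, the second component
`φ_{μ₂,σ}(x)` and its derivative `φ_{μ₂,σ}(x) (μ₂ - x) / σ²` are a Gaussian tail in `μ₂ - x`
times a polynomial, so both vanish as `μ₂ → ∞`; what remains is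
`π φ_{μ₁,σ}'(x) / (π φ_{μ₁,σ}(x))`, the score of the first component. -/

open Topology

lemma gaussian_pos (μ : ℝ) {σ : ℝ} (hσ : 0 < σ) (x : ℝ) : 0 < gaussian μ σ x := by
  unfold gaussian
  positivity

lemma hasDerivAt_gaussian (μ σ x : ℝ) :
    HasDerivAt (gaussian μ σ) (gaussian μ σ x * (-(x - μ) / σ ^ 2)) x := by
  have hexponent : HasDerivAt (fun y => -(y - μ) ^ 2 / (2 * σ ^ 2)) (-(x - μ) / σ ^ 2) x := by
    refine ((((hasDerivAt_id x).sub_const μ).pow 2).neg.div_const (2 * σ ^ 2)).congr_deriv ?_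
    simp only [id, Nat.cast_ofNat, pow_one, mul_one, Nat.add_one_sub_one]
    rw [neg_div, neg_div, mul_div_mul_left _ _ two_ne_zero]
  refine (hexponent.exp.const_mul (σ * Real.sqrt (2 * Real.pi))⁻¹).congr_deriv ?_
  simp only [gaussian]
  ring

lemma score_eq_of_hasDerivAt {ρ : ℝ → ℝ} {ρ' x : ℝ} (h : HasDerivAt ρ ρ' x) (hx : ρ x ≠ 0) :
    score ρ x = ρ' / ρ x :=
  (h.log hx).deriv

lemma tendsto_pow_mul_exp_neg_mul_sq_atTop {a : ℝ} (ha : 0 < a) (n : ℕ) :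
    Tendsto (fun t : ℝ => t ^ n * Real.exp (-a * t ^ 2)) atTop (𝓝 0) := by
  refine ((tendsto_rpow_abs_mul_exp_neg_mul_sq_cocompact ha n).mono_left
    atTop_le_cocompact).congr' ?_
  filter_upwards [eventually_ge_atTop 0] with t ht
  rw [abs_of_nonneg ht, Real.rpow_natCast]

lemma tendsto_sub_pow_mul_gaussian_atTop {σ : ℝ} (hσ : σ ≠ 0) (x : ℝ) (n : ℕ) :
    Tendsto (fun μ => (μ - x) ^ n * gaussian μ σ x) atTop (𝓝 0) := by
  have h := ((tendsto_pow_mul_exp_neg_mul_sq_atTop (a := (2 * σ ^ 2)⁻¹) (by positivity) n).comp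
    (tendsto_atTop_add_const_right atTop (-x) tendsto_id)).const_mul
      (σ * Real.sqrt (2 * Real.pi))⁻¹
  rw [mul_zero] at h
  refine h.congr fun μ => ?_
  simp only [gaussian, Function.comp_apply, id]
  rw [show -(x - μ) ^ 2 / (2 * σ ^ 2) = -(2 * σ ^ 2)⁻¹ * (μ + -x) ^ 2 by ring, ← sub_eq_add_neg]
  ring

lemma score_gaussian_mixture {σ w : ℝ} (μ₁ μ₂ : ℝ) (hσ : 0 < σ) (hw : w ∈ Set.Ioo (0 : ℝ) 1)
    (x : ℝ) :
    score (fun y => w * gaussian μ₁ σ y + (1 - w) * gaussian μ₂ σ y) x =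
      (w * gaussian μ₁ σ x * (-(x - μ₁) / σ ^ 2) +
        (1 - w) * ((μ₂ - x) * gaussian μ₂ σ x) / σ ^ 2) /
      (w * gaussian μ₁ σ x + (1 - w) * gaussian μ₂ σ x) := by
  have hmix : w * gaussian μ₁ σ x + (1 - w) * gaussian μ₂ σ x ≠ 0 := by
    have := gaussian_pos μ₁ hσ x
    have := gaussian_pos μ₂ hσ x
    have := sub_pos.2 hw.2
    have := hw.1
    positivity
  rw [score_eq_of_hasDerivAt (((hasDerivAt_gaussian μ₁ σ x).const_mul w).fun_add
    ((hasDerivAt_gaussian μ₂ σ x).const_mul (1 - w))) hmix]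
  ring

/-- as `μ₂ → +∞` the mixture score converges pointwise to the score
of the first component. -/
theorem mixture_score_tendsto_first_component (μ₁ σ w : ℝ) (hσ : 0 < σ)
    (hw : w ∈ Set.Ioo (0 : ℝ) 1) (x : ℝ) :
    Tendsto (fun μ₂ => score (fun y => w * gaussian μ₁ σ y + (1 - w) * gaussian μ₂ σ y) x)
      atTop (nhds (-(x - μ₁) / σ ^ 2)) := by
  simp_rw [score_gaussian_mixture μ₁ _ hσ hw x]
  have hfirst : w * gaussian μ₁ σ x ≠ 0 := (mul_pos hw.1 (gaussian_pos μ₁ hσ x)).ne'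
  have hnum := tendsto_const_nhds (x := w * gaussian μ₁ σ x * (-(x - μ₁) / σ ^ 2)) |>.add
    (((tendsto_sub_pow_mul_gaussian_atTop hσ.ne' x 1).const_mul (1 - w)).div_const (σ ^ 2))
  have hden := tendsto_const_nhds (x := w * gaussian μ₁ σ x) |>.add
    ((tendsto_sub_pow_mul_gaussian_atTop hσ.ne' x 0).const_mul (1 - w))
  simp only [pow_one, pow_zero, one_mul, mul_zero, zero_div, add_zero] at hnum hden
  simpa only [mul_div_cancel_left₀ _ hfirst, Pi.div_def] using hnum.div hden hfirst
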